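/- Let a ≥ 0, q with second moment m₂ < ∞, and (Y_n^{(k)}) the rescaled generalized DR process as above with renewal rate a/k. Then the one-step second-moment bound E[(Y_{n+1}^{(k)})²] ≤ (1 + a(2m₂+1)/k) E[(Y_n^{(k)})²] holds, and consequently E[(Y_{⌊kt⌋}^{(k)})²] ≤ e^{a(2m₂+1)t} E[(Y₀^{(k)})²] for all t ≥ 0. -/

import Mathlib

open MeasureTheory ProbabilityTheory Filter
open scoped ENNReal NNReal

noncomputable section

/-- Truncated Euclidean cost `ρ(x,y) = min(1, |x-y|)` on `ℝ≥0`. -/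
def rho (x y : ℝ≥0) : ℝ := min 1 |(x : ℝ) - (y : ℝ)|

/-- `π` is a coupling of `μ` and `ν`. -/
def IsCoupling (π : Measure (ℝ≥0 × ℝ≥0)) (μ ν : Measure ℝ≥0) : Prop :=
  π.map Prod.fst = μ ∧ π.map Prod.snd = ν

/-- Wasserstein distance for the truncated cost. -/
def W (μ ν : Measure ℝ≥0) : ℝ :=
  sInf { r : ℝ | ∃ π : Measure (ℝ≥0 × ℝ≥0),
    IsProbabilityMeasure π ∧ IsCoupling π μ ν ∧ r = ∫ p, rho p.1 p.2 ∂π }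

/-- Convolution of two measures on `ℝ≥0`. -/
def conv (μ ν : Measure ℝ≥0) : Measure ℝ≥0 :=
  (μ.prod ν).map (fun p => p.1 + p.2)

/-- `k`-fold convolution power (`convPow μ 0 = δ₀`). -/
def convPow (μ : Measure ℝ≥0) : ℕ → Measure ℝ≥0
  | 0 => Measure.dirac 0
  | n + 1 => conv (convPow μ n) μ

/-- The `q`-mixture `μ^q = ∑_{k≥1} q_k μ^{*k}` (`q k` = weight of `k`). -/
def qMix (q : ℕ → ℝ≥0) (μ : Measure ℝ≥0) : Measure ℝ≥0 :=
  Measure.sum (fun k => ((q (k + 1) : ℝ≥0∞)) • convPow μ (k + 1))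

/-- Total variation norm of the difference of two finite measures. -/
def tvDist (μ ν : Measure ℝ≥0) : ℝ :=
  sSup { r : ℝ | ∃ s : Set ℝ≥0, MeasurableSet s ∧
    r = |(μ s).toReal - (ν s).toReal| + |(μ sᶜ).toReal - (ν sᶜ).toReal| }

/-!
On `{η = 0}` a step can only decrease `Y`, while on `{η = 1}` it gives
`Y'² ≤ (Y + Z/k)² ≤ 2Y² + 2Z²/k²`; hence `Y'² ≤ Y² + η (Y² + 2Z²/k²)` pointwise. As `η` is
independent of `Y` and of `Z` and `P(η = 1) = a/k`, this yields
`E Y'² ≤ (1 + a/k) E Y² + (2a/k³) E Z²`, and `E Z² ≤ m₂ E Y²` because the `j`-fold convolution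
power of a law has second moment at most `j²` times that of the law (Cauchy–Schwarz on the cross
terms). Iterating `⌊kt⌋` times and `(1 + x/k)^⌊kt⌋ ≤ e^{xt}` give the exponential bound.
-/

lemma lintegral_conv {μ ν : Measure ℝ≥0} [SFinite ν] {f : ℝ≥0 → ℝ≥0∞} (hf : Measurable f) :
    ∫⁻ z, f z ∂(conv μ ν) = ∫⁻ x, ∫⁻ y, f (x + y) ∂ν ∂μ := by
  rw [conv, lintegral_map hf measurable_add]
  exact lintegral_prod _ (hf.comp measurable_add).aemeasurable

instance isProbabilityMeasure_conv (μ ν : Measure ℝ≥0) [IsProbabilityMeasure μ]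
    [IsProbabilityMeasure ν] : IsProbabilityMeasure (conv μ ν) :=
  Measure.isProbabilityMeasure_map measurable_add.aemeasurable

instance isProbabilityMeasure_convPow (μ : Measure ℝ≥0) [IsProbabilityMeasure μ] (n : ℕ) :
    IsProbabilityMeasure (convPow μ n) := by
  induction n with
  | zero => exact Measure.dirac.isProbabilityMeasure
  | succ n _ => exact isProbabilityMeasure_conv _ _

lemma sq_lintegral_le_lintegral_sq {α : Type*} [MeasurableSpace α] {ν : Measure α}
    [IsProbabilityMeasure ν] {f : α → ℝ≥0∞} (hf : AEMeasurable f ν) :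
    (∫⁻ x, f x ∂ν) ^ 2 ≤ ∫⁻ x, f x ^ 2 ∂ν := by
  have holder := ENNReal.lintegral_mul_le_Lp_mul_Lq ν Real.HolderConjugate.two_two hf
    (g := fun _ => 1) aemeasurable_const
  simp only [Pi.mul_apply, mul_one, ENNReal.one_rpow, lintegral_const, measure_univ] at holder
  calc (∫⁻ x, f x ∂ν) ^ 2 ≤ ((∫⁻ x, f x ^ (2 : ℝ) ∂ν) ^ (1 / 2 : ℝ)) ^ 2 := by gcongr
    _ = ∫⁻ x, f x ^ 2 ∂ν := by
      rw [← ENNReal.rpow_natCast, ← ENNReal.rpow_mul]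
      norm_num

section Convolution

variable {μ : Measure ℝ≥0} [IsProbabilityMeasure μ]

lemma lintegral_coe_convPow (n : ℕ) :
    ∫⁻ z, (z : ℝ≥0∞) ∂(convPow μ n) = n * ∫⁻ z, (z : ℝ≥0∞) ∂μ := by
  induction n with
  | zero => simp [convPow]
  | succ n ih =>
    rw [convPow, lintegral_conv measurable_coe_nnreal_ennreal]
    simp_rw [ENNReal.coe_add]
    simp only [lintegral_add_left measurable_const, lintegral_const, measure_univ, mul_one]
    rw [lintegral_add_right _ measurable_const, lintegral_const, ih, measure_univ]
    push_cast
    ring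

lemma lintegral_sq_convPow_le (n : ℕ) :
    ∫⁻ z, (z : ℝ≥0∞) ^ 2 ∂(convPow μ n) ≤ n ^ 2 * ∫⁻ z, (z : ℝ≥0∞) ^ 2 ∂μ := by
  set M := ∫⁻ z, (z : ℝ≥0∞) ^ 2 ∂μ
  set m := ∫⁻ z, (z : ℝ≥0∞) ∂μ
  have hmM : m ^ 2 ≤ M := sq_lintegral_le_lintegral_sq measurable_coe_nnreal_ennreal.aemeasurable
  have hsq : Measurable fun y : ℝ≥0 => (y : ℝ≥0∞) ^ 2 := by fun_prop
  have hinner (x : ℝ≥0) : ∫⁻ y, ((x + y : ℝ≥0) : ℝ≥0∞) ^ 2 ∂μ = x ^ 2 + 2 * m * x + M := by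
    simp_rw [ENNReal.coe_add, add_sq]
    rw [lintegral_add_right _ hsq, lintegral_add_left measurable_const,
      lintegral_const_mul _ measurable_coe_nnreal_ennreal, lintegral_const, measure_univ]
    ring
  induction n with
  | zero => simp [convPow]
  | succ n ih =>
    calc ∫⁻ z, (z : ℝ≥0∞) ^ 2 ∂(convPow μ (n + 1))
        = ∫⁻ x, ((x : ℝ≥0∞) ^ 2 + 2 * m * x + M) ∂(convPow μ n) := by
          rw [convPow, lintegral_conv hsq]
          exact lintegral_congr hinner
      _ = ∫⁻ x, (x : ℝ≥0∞) ^ 2 ∂(convPow μ n) + 2 * m * (n * m) + M := by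
          rw [lintegral_add_right _ measurable_const, lintegral_add_left hsq,
            lintegral_const_mul _ measurable_coe_nnreal_ennreal, lintegral_coe_convPow,
            lintegral_const, measure_univ, mul_one]
      _ ≤ n ^ 2 * M + 2 * n * M + M := by
          rw [show 2 * m * (n * m) = 2 * n * m ^ 2 by ring]
          gcongr
      _ = ((n + 1 : ℕ) : ℝ≥0∞) ^ 2 * M := by
          push_cast
          ring

end Convolution

lemma lintegral_qMix (q : ℕ → ℝ≥0) (μ : Measure ℝ≥0) (f : ℝ≥0 → ℝ≥0∞) :
    ∫⁻ z, f z ∂(qMix q μ) = ∑' j, (q (j + 1) : ℝ≥0∞) * ∫⁻ z, f z ∂(convPow μ (j + 1)) := by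
  simp only [qMix, lintegral_sum_measure, lintegral_smul_measure, smul_eq_mul]

lemma lintegral_sq_qMix_le (q : ℕ → ℝ≥0) (μ : Measure ℝ≥0) [IsProbabilityMeasure μ] :
    ∫⁻ z, (z : ℝ≥0∞) ^ 2 ∂(qMix q μ)
      ≤ (∑' j : ℕ, (j : ℝ≥0∞) ^ 2 * q j) * ∫⁻ z, (z : ℝ≥0∞) ^ 2 ∂μ := by
  rw [lintegral_qMix, ← ENNReal.tsum_mul_right]
  nth_rewrite 2 [tsum_eq_zero_add' ENNReal.summable]
  simp only [CharP.cast_eq_zero, zero_pow two_ne_zero, zero_mul, zero_add]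
  refine ENNReal.tsum_le_tsum fun j => ?_
  calc (q (j + 1) : ℝ≥0∞) * ∫⁻ z, (z : ℝ≥0∞) ^ 2 ∂(convPow μ (j + 1))
      ≤ q (j + 1) * ((j + 1 : ℕ) ^ 2 * ∫⁻ z, (z : ℝ≥0∞) ^ 2 ∂μ) := by
        gcongr
        exact lintegral_sq_convPow_le _
    _ = _ := by ring

lemma lintegral_coe_eq_measure_of_zero_or_one {α : Type*} [MeasurableSpace α] {ν : Measure α}
    {b : α → ℝ≥0} (hb : Measurable b) (h01 : ∀ x, b x = 0 ∨ b x = 1) :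
    ∫⁻ x, (b x : ℝ≥0∞) ∂ν = ν {x | b x = 1} := by
  have hs : MeasurableSet {x | b x = 1} := hb (measurableSet_singleton 1)
  rw [← lintegral_indicator_one hs]
  refine lintegral_congr fun x => ?_
  rcases h01 x with h | h <;> simp [h, Set.indicator]

lemma sq_add_mul_tsub_le {x z e b : ℝ≥0} (hb : b = 0 ∨ b = 1) :
    (x + b * z - e) ^ 2 ≤ x ^ 2 + b * (x ^ 2 + 2 * z ^ 2) := by
  rcases hb with rfl | rfl
  · simp only [zero_mul, add_zero]
    gcongr
    exact tsub_le_self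
  · calc (x + 1 * z - e) ^ 2 ≤ (x + z) ^ 2 := by gcongr; simp
      _ ≤ 2 * (x ^ 2 + z ^ 2) := add_sq_le
      _ = _ := by ring

section Step

variable {Ω : Type*} {mΩ : MeasurableSpace Ω} {P : Measure Ω}

lemma lintegral_sq_le_of_renewal_step {Y η Z Y' : Ω → ℝ≥0} {c m : ℝ≥0}
    (hY : Measurable Y) (hη : Measurable η) (hZ : Measurable Z)
    (hrec : ∀ ω, Y' ω = Y ω + c * η ω * Z ω - c) (hη01 : ∀ ω, η ω = 0 ∨ η ω = 1)
    (hηY : IndepFun η Y P) (hηZ : IndepFun η Z P)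
    (hZ2 : ∫⁻ ω, (Z ω : ℝ≥0∞) ^ 2 ∂P ≤ m * ∫⁻ ω, (Y ω : ℝ≥0∞) ^ 2 ∂P) :
    ∫⁻ ω, (Y' ω : ℝ≥0∞) ^ 2 ∂P
      ≤ (1 + P {ω | η ω = 1} * (1 + 2 * c ^ 2 * m)) * ∫⁻ ω, (Y ω : ℝ≥0∞) ^ 2 ∂P := by
  set p := P {ω | η ω = 1}
  set M := ∫⁻ ω, (Y ω : ℝ≥0∞) ^ 2 ∂P
  have hpt (ω : Ω) : (Y' ω : ℝ≥0∞) ^ 2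
      ≤ (Y ω : ℝ≥0∞) ^ 2 + ((η ω * (Y ω) ^ 2 : ℝ≥0∞) + 2 * c ^ 2 * (η ω * (Z ω) ^ 2)) := by
    have h := sq_add_mul_tsub_le (x := Y ω) (z := c * Z ω) (e := c) (hη01 ω)
    rw [hrec ω, show c * η ω * Z ω = η ω * (c * Z ω) by ring]
    exact_mod_cast h.trans_eq (by ring)
  have hηp : ∫⁻ ω, (η ω : ℝ≥0∞) ∂P = p := lintegral_coe_eq_measure_of_zero_or_one hη hη01
  have hmul {V : Ω → ℝ≥0} (hV : Measurable V) (hind : IndepFun η V P) :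
      ∫⁻ ω, η ω * (V ω : ℝ≥0∞) ^ 2 ∂P = p * ∫⁻ ω, (V ω : ℝ≥0∞) ^ 2 ∂P := by
    rw [← hηp]
    exact lintegral_mul_eq_lintegral_mul_lintegral_of_indepFun'' (by fun_prop) (by fun_prop)
      (hind.comp (φ := fun x : ℝ≥0 => (x : ℝ≥0∞)) (ψ := fun x : ℝ≥0 => (x : ℝ≥0∞) ^ 2)
        (by fun_prop) (by fun_prop))
  calc ∫⁻ ω, (Y' ω : ℝ≥0∞) ^ 2 ∂P
      ≤ ∫⁻ ω, ((Y ω : ℝ≥0∞) ^ 2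
          + ((η ω * (Y ω) ^ 2 : ℝ≥0∞) + 2 * c ^ 2 * (η ω * (Z ω) ^ 2))) ∂P :=
        lintegral_mono hpt
    _ = M + (p * M + 2 * c ^ 2 * (p * ∫⁻ ω, (Z ω : ℝ≥0∞) ^ 2 ∂P)) := by
        rw [lintegral_add_left (by fun_prop), lintegral_add_left (by fun_prop),
          lintegral_const_mul _ (by fun_prop), hmul hY hηY, hmul hZ hηZ]
    _ ≤ M + (p * M + 2 * c ^ 2 * (p * (m * M))) := by gcongr
    _ = (1 + p * (1 + 2 * c ^ 2 * m)) * M := by ring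

lemma integral_sq_coe_eq_toReal_lintegral {f : Ω → ℝ≥0} (hf : Measurable f) :
    ∫ ω, (f ω : ℝ) ^ 2 ∂P = (∫⁻ ω, (f ω : ℝ≥0∞) ^ 2 ∂P).toReal := by
  rw [← integral_toReal (by fun_prop) (ae_of_all _ fun ω => by simp)]
  simp

lemma lintegral_sq_coe_ne_top {f : Ω → ℝ≥0} (hf : Integrable (fun ω => (f ω : ℝ) ^ 2) P) :
    ∫⁻ ω, (f ω : ℝ≥0∞) ^ 2 ∂P ≠ ∞ := by
  refine ne_of_lt (hf.lintegral_lt_top.trans_eq' (lintegral_congr fun ω => ?_))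
  rw [ENNReal.ofReal_pow (by positivity), ENNReal.ofReal_coe_nnreal]

lemma lintegral_sq_le_of_map_eq_qMix [IsProbabilityMeasure P] {Y Z : Ω → ℝ≥0} {q : ℕ → ℝ≥0}
    {m : ℝ} (hY : Measurable Y) (hZ : Measurable Z) (hlaw : P.map Z = qMix q (P.map Y))
    (hm : HasSum (fun j : ℕ => (j : ℝ) ^ 2 * (q j : ℝ)) m) :
    ∫⁻ ω, (Z ω : ℝ≥0∞) ^ 2 ∂P ≤ ENNReal.ofReal m * ∫⁻ ω, (Y ω : ℝ≥0∞) ^ 2 ∂P := by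
  have hmix : ∑' j : ℕ, (j : ℝ≥0∞) ^ 2 * q j = ENNReal.ofReal m := by
    rw [← hm.tsum_eq, ENNReal.ofReal_tsum_of_nonneg (fun j => by positivity) hm.summable]
    refine tsum_congr fun j => ?_
    rw [ENNReal.ofReal_mul (by positivity)]
    simp
  have := Measure.isProbabilityMeasure_map (μ := P) hY.aemeasurable
  have h := lintegral_sq_qMix_le q (P.map Y)
  rwa [← hlaw, lintegral_map (by fun_prop) hZ, lintegral_map (by fun_prop) hY, hmix] at h

end Step

lemma ENNReal.toReal_succ_le_mul_of_le_ofReal_mul {u : ℕ → ℝ≥0∞} {B : ℝ} (hB : 0 ≤ B)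
    (h0 : u 0 ≠ ∞) (h : ∀ n, u (n + 1) ≤ ENNReal.ofReal B * u n) (n : ℕ) :
    (u (n + 1)).toReal ≤ B * (u n).toReal := by
  have hfin (n : ℕ) : u n ≠ ∞ := by
    induction n with
    | zero => exact h0
    | succ n ih => exact ne_top_of_le_ne_top (ENNReal.mul_ne_top ENNReal.ofReal_ne_top ih) (h n)
  rw [← ENNReal.toReal_ofReal hB, ← ENNReal.toReal_mul]
  exact ENNReal.toReal_mono (ENNReal.mul_ne_top ENNReal.ofReal_ne_top (hfin n)) (h n)

lemma one_add_div_pow_floor_mul_le_exp {r t : ℝ} (hr : 0 ≤ r) (ht : 0 ≤ t) (k : ℕ) :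
    (1 + r / k) ^ ⌊k * t⌋₊ ≤ Real.exp (r * t) := by
  have hfloor : (⌊k * t⌋₊ : ℝ) / k ≤ t :=
    div_le_of_le_mul₀ (Nat.cast_nonneg k) ht
      ((Nat.floor_le (by positivity)).trans_eq (mul_comm _ _))
  calc (1 + r / k) ^ ⌊k * t⌋₊ ≤ Real.exp (r / k) ^ ⌊k * t⌋₊ := by
        gcongr
        rw [add_comm]
        exact Real.add_one_le_exp _
    _ = Real.exp (r * (⌊k * t⌋₊ / k)) := by
        rw [← Real.exp_nat_mul]
        congr 1
        ring
    _ ≤ Real.exp (r * t) := by gcongr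

theorem rescaled_secondMoment_bound_general
    {Ω : Type*} {mΩ : MeasurableSpace Ω} (P : Measure Ω) [IsProbabilityMeasure P]
    (a m₂ : ℝ) (ha : 0 ≤ a)
    (q : ℕ → ℝ≥0)
    (hm₂ : HasSum (fun j : ℕ => ((j : ℝ)) ^ 2 * (q j : ℝ)) m₂)
    (Y η Z : ℕ → ℕ → Ω → ℝ≥0)
    (hYmeas : ∀ k n, Measurable (Y k n)) (hηmeas : ∀ k n, Measurable (η k n))
    (hZmeas : ∀ k n, Measurable (Z k n))
    (hrec : ∀ k n ω, Y k (n + 1) ω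
      = Y k n ω + ((k : ℝ≥0))⁻¹ * η k n ω * Z k n ω - ((k : ℝ≥0))⁻¹)
    (hZlaw : ∀ k n, P.map (Z k n) = qMix q (P.map (Y k n)))
    (hη01 : ∀ k n ω, η k n ω = 0 ∨ η k n ω = 1)
    (hηlaw : ∀ k n, 1 ≤ k → P {ω | η k n ω = 1} = ENNReal.ofReal (a / k))
    (hindep : ∀ k n, IndepFun (fun ω => (η k n ω, Z k n ω)) (Y k n) P)
    (hηZ : ∀ k n, IndepFun (η k n) (Z k n) P)
    (hint : ∀ k, Integrable (fun ω => ((Y k 0 ω : ℝ)) ^ 2) P) :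
    ∀ k : ℕ, 1 ≤ k → a ≤ (k : ℝ) →
      (∀ n : ℕ, ∫ ω, ((Y k (n + 1) ω : ℝ)) ^ 2 ∂P
          ≤ (1 + a * (2 * m₂ + 1) / k) * ∫ ω, ((Y k n ω : ℝ)) ^ 2 ∂P) ∧
      (∀ t : ℝ, 0 ≤ t →
        ∫ ω, ((Y k (Nat.floor ((k : ℝ) * t)) ω : ℝ)) ^ 2 ∂P
          ≤ Real.exp (a * (2 * m₂ + 1) * t) * ∫ ω, ((Y k 0 ω : ℝ)) ^ 2 ∂P) := by
  intro k hk _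
  have hm₂0 : 0 ≤ m₂ := hm₂.nonneg fun j => by positivity
  set B := 1 + a * (2 * m₂ + 1) / k
  have hB0 : 0 ≤ B := by positivity
  have hC : 1 + ENNReal.ofReal (a / k)
      * (1 + 2 * (((k : ℝ≥0)⁻¹ : ℝ≥0) : ℝ≥0∞) ^ 2 * m₂.toNNReal) ≤ ENNReal.ofReal B := by
    have hk1 : ((k : ℝ)⁻¹) ^ 2 ≤ 1 :=
      pow_le_one₀ (by positivity) (inv_le_one_of_one_le₀ (by exact_mod_cast hk))
    rw [ENNReal.ofReal, ENNReal.ofReal, ← ENNReal.coe_ofNat, ← ENNReal.coe_one]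
    norm_cast
    rw [Real.le_toNNReal_iff_coe_le hB0]
    push_cast [Real.coe_toNNReal _ hm₂0, Real.coe_toNNReal _ (by positivity : 0 ≤ a / k)]
    calc 1 + a / k * (1 + 2 * ((k : ℝ)⁻¹) ^ 2 * m₂) ≤ 1 + a / k * (1 + 2 * 1 * m₂) := by gcongr
      _ = B := by ring
  have hstep (n : ℕ) : ∫⁻ ω, (Y k (n + 1) ω : ℝ≥0∞) ^ 2 ∂P
      ≤ ENNReal.ofReal B * ∫⁻ ω, (Y k n ω : ℝ≥0∞) ^ 2 ∂P := by
    refine (lintegral_sq_le_of_renewal_step (hYmeas k n) (hηmeas k n) (hZmeas k n) (hrec k n)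
      (hη01 k n) ((hindep k n).comp measurable_fst measurable_id) (hηZ k n)
      (lintegral_sq_le_of_map_eq_qMix (hYmeas k n) (hZmeas k n) (hZlaw k n) hm₂)).trans ?_
    rw [hηlaw k n hk]
    gcongr
  have hone (n : ℕ) : ∫ ω, (Y k (n + 1) ω : ℝ) ^ 2 ∂P ≤ B * ∫ ω, (Y k n ω : ℝ) ^ 2 ∂P := by
    simp only [integral_sq_coe_eq_toReal_lintegral (hYmeas k _)]
    exact ENNReal.toReal_succ_le_mul_of_le_ofReal_mul hB0 (lintegral_sq_coe_ne_top (hint k))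
      hstep n
  refine ⟨hone, fun t ht => ?_⟩
  calc ∫ ω, (Y k ⌊k * t⌋₊ ω : ℝ) ^ 2 ∂P ≤ B ^ ⌊k * t⌋₊ * ∫ ω, (Y k 0 ω : ℝ) ^ 2 ∂P :=
        le_geom (u := fun n => ∫ ω, (Y k n ω : ℝ) ^ 2 ∂P) hB0 _ fun n _ => hone n
    _ ≤ Real.exp (a * (2 * m₂ + 1) * t) * ∫ ω, (Y k 0 ω : ℝ) ^ 2 ∂P := by
        gcongr
        exact one_add_div_pow_floor_mul_le_exp (by positivity) ht k

/-- Second-moment bounds for the rescaled generalized DR processes: the one-step bound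
`E[(Y^{(k)}_{n+1})²] ≤ (1 + a(2m₂+1)/k) E[(Y^{(k)}_n)²]` and consequently
`E[(Y^{(k)}_{⌊kt⌋})²] ≤ e^{a(2m₂+1)t} E[(Y^{(k)}_0)²]`. -/
theorem rescaled_secondMoment_bound
    {Ω : Type*} {mΩ : MeasurableSpace Ω} (P : Measure Ω) [IsProbabilityMeasure P]
    (a m₂ : ℝ) (ha : 0 ≤ a)
    (q : ℕ → ℝ≥0) (hq0 : q 0 = 0) (hq1 : ∑' j, q j = 1)
    (hm₂ : HasSum (fun j : ℕ => ((j : ℝ)) ^ 2 * (q j : ℝ)) m₂)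
    (Y η Z : ℕ → ℕ → Ω → ℝ≥0)
    (hYmeas : ∀ k n, Measurable (Y k n)) (hηmeas : ∀ k n, Measurable (η k n))
    (hZmeas : ∀ k n, Measurable (Z k n))
    (hrec : ∀ k n ω, Y k (n + 1) ω
      = Y k n ω + ((k : ℝ≥0))⁻¹ * η k n ω * Z k n ω - ((k : ℝ≥0))⁻¹)
    (hZlaw : ∀ k n, P.map (Z k n) = qMix q (P.map (Y k n)))
    (hη01 : ∀ k n ω, η k n ω = 0 ∨ η k n ω = 1)
    (hηlaw : ∀ k n, 1 ≤ k → P {ω | η k n ω = 1} = ENNReal.ofReal (a / k))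
    (hindep : ∀ k n, IndepFun (fun ω => (η k n ω, Z k n ω)) (Y k n) P)
    (hηZ : ∀ k n, IndepFun (η k n) (Z k n) P)
    (hint : ∀ k, Integrable (fun ω => ((Y k 0 ω : ℝ)) ^ 2) P) :
    ∀ k : ℕ, 1 ≤ k → a ≤ (k : ℝ) →
      (∀ n : ℕ, ∫ ω, ((Y k (n + 1) ω : ℝ)) ^ 2 ∂P
          ≤ (1 + a * (2 * m₂ + 1) / k) * ∫ ω, ((Y k n ω : ℝ)) ^ 2 ∂P) ∧
      (∀ t : ℝ, 0 ≤ t →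
        ∫ ω, ((Y k (Nat.floor ((k : ℝ) * t)) ω : ℝ)) ^ 2 ∂P
          ≤ Real.exp (a * (2 * m₂ + 1) * t) * ∫ ω, ((Y k 0 ω : ℝ)) ^ 2 ∂P) :=
  rescaled_secondMoment_bound_general (mΩ := mΩ) P a m₂ ha q hm₂ Y η Z hYmeas hηmeas hZmeas hrec
    hZlaw hη01 hηlaw hindep hηZ hint
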